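/- arXiv:2105.12893 — 3 statements merged into one kernel-verified Lean document; each statement's English description precedes it below -/
import Mathlib

section
/- Let θ₁,…,θ_m ∈ Θ be candidate parameters, let X₁,…,X_N be an i.i.d. sample from the distribution with CDF F^{θ₀}, and for each i let Y₁^{θ_i},…,Y_n^{θ_i} be an i.i.d. sample from the distribution with CDF F^{θ_i}, with F_N^{θ₀} and F_n^{θ_i} the corresponding empirical distribution functions. Define the eligibility set 𝓔̂_m = { θ_i : sup_{x∈ℝ} |F_n^{θ_i}(x) − F_N^{θ₀}(x)| ≤ q_{1−α}/√N }. For any ε, ε₁, ε₂ > 0 with ε₁ + ε₂ < ε, if N > ( q_{1−α}/(ε − ε₁ − ε₂) )², then ℙ( ∃ i ∈ {1,…,m} such that sup_{x∈ℝ} |F^{θ_i}(x) − F^{θ₀}(x)| > ε and θ_i ∈ 𝓔̂_m ) ≤ 2m( e^{−2nε₁²} + e^{−2Nε₂²} ). -/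
/-!
A candidate more than `ε` away from the truth in Kolmogorov–Smirnov distance has a point `x`
where the two CDFs differ by more than `ε₁ + ε₂ + q/√N`. If the candidate is eligible, its
empirical CDF is within `q/√N` of the data's at `x`, so one of the two empirical CDFs deviates
from its own CDF at `x` by more than `ε₁` resp. `ε₂`. An empirical CDF at a fixed point is a mean
of independent Bernoulli variables, so Hoeffding's inequality bounds these deviations by
`2e^{-2nε₁²}` and `2e^{-2Nε₂²}`, and a union bound over the `m` candidates concludes.
-/

open MeasureTheory ProbabilityTheory Filter

/-- Empirical distribution function of a finite sample of real-valued random variables. -/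
noncomputable def ecdfFin {Ω : Type*} {M : ℕ} (Z : Fin M → Ω → ℝ) (ω : Ω) (x : ℝ) : ℝ :=
  (M : ℝ)⁻¹ * ∑ i, if Z i ω ≤ x then (1 : ℝ) else 0

open Real NNReal

lemma lt_abs_sub_or_lt_abs_sub_of_abs_sub_le {a b c d e₁ e₂ δ : ℝ}
    (h : e₁ + e₂ + δ < |a - b|) (hcd : |c - d| ≤ δ) : e₁ < |c - a| ∨ e₂ < |d - b| := by
  by_contra! h'
  have := abs_sub_le a c b
  have := abs_sub_le c d b
  rw [abs_sub_comm a c] at *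
  linarith [h'.1, h'.2]

lemma div_sqrt_lt_of_sq_div_lt {q d N : ℝ} (hd : 0 < d) (h : (q / d) ^ 2 < N) :
    q / √N < d := by
  have hN : 0 < √N := Real.sqrt_pos.mpr ((sq_nonneg _).trans_lt h)
  rw [div_lt_iff₀ hN, ← div_lt_iff₀' hd]
  exact Real.lt_sqrt_of_sq_lt h

section ECDF

variable {Ω : Type*} {M : ℕ}

lemma ecdfFin_nonneg (Z : Fin M → Ω → ℝ) (ω : Ω) (x : ℝ) : 0 ≤ ecdfFin Z ω x :=
  mul_nonneg (by positivity) (Finset.sum_nonneg fun _ _ => by split_ifs <;> norm_num)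

lemma ecdfFin_le_one (Z : Fin M → Ω → ℝ) (ω : Ω) (x : ℝ) : ecdfFin Z ω x ≤ 1 := by
  rcases Nat.eq_zero_or_pos M with rfl | hM
  · simp [ecdfFin]
  rw [ecdfFin, inv_mul_le_iff₀ (by exact_mod_cast hM), mul_one]
  calc (∑ i, if Z i ω ≤ x then (1 : ℝ) else 0) ≤ ∑ _i : Fin M, (1 : ℝ) :=
        Finset.sum_le_sum fun _ _ => by split_ifs <;> norm_num
    _ = M := by simp

lemma bddAbove_range_abs_ecdfFin_sub {M' : ℕ} (Z : Fin M → Ω → ℝ) (Z' : Fin M' → Ω → ℝ)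
    (ω : Ω) : BddAbove (Set.range fun x => |ecdfFin Z ω x - ecdfFin Z' ω x|) := by
  refine ⟨1, ?_⟩
  rintro _ ⟨x, rfl⟩
  have := ecdfFin_nonneg Z ω x
  have := ecdfFin_le_one Z ω x
  have := ecdfFin_nonneg Z' ω x
  have := ecdfFin_le_one Z' ω x
  exact abs_sub_le_iff.mpr ⟨by linarith, by linarith⟩

lemma ecdfFin_sub_eq (hM : 0 < M) (Z : Fin M → Ω → ℝ) (ω : Ω) (x p : ℝ) :
    ecdfFin Z ω x - p = (M : ℝ)⁻¹ * ∑ j, ((if Z j ω ≤ x then (1 : ℝ) else 0) - p) := by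
  simp only [ecdfFin, Finset.sum_sub_distrib, Finset.sum_const, Finset.card_univ,
    Fintype.card_fin, nsmul_eq_mul]
  field_simp

end ECDF

section Concentration

variable {Ω : Type*} [MeasurableSpace Ω] {Pr : Measure Ω}

lemma measureReal_lt_abs_sum_le_of_iIndepFun [IsFiniteMeasure Pr] {ι : Type*} [Fintype ι]
    {V : ι → Ω → ℝ} (h_indep : iIndepFun V Pr) {c : ℝ≥0} (h_subG : ∀ i, HasSubgaussianMGF (V i) c Pr)
    {ε : ℝ} (hε : 0 ≤ ε) :
    Pr.real {ω | ε < |∑ i, V i ω|} ≤ 2 * exp (-ε ^ 2 / (2 * (Fintype.card ι * c))) := by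
  have h_upper := HasSubgaussianMGF.measure_sum_ge_le_of_iIndepFun h_indep
    (s := Finset.univ) (fun i _ => h_subG i) hε
  have h_lower := HasSubgaussianMGF.measure_sum_ge_le_of_iIndepFun
    (h_indep.comp (fun _ y => -y) fun _ => measurable_neg)
    (s := Finset.univ) (fun i _ => (h_subG i).neg) hε
  simp only [Finset.sum_const, Finset.card_univ, nsmul_eq_mul, NNReal.coe_mul,
    NNReal.coe_natCast, Function.comp_apply] at h_upper h_lower
  have h_cover : {ω | ε < |∑ i, V i ω|} ⊆
      {ω | ε ≤ ∑ i, V i ω} ∪ {ω | ε ≤ ∑ i, -V i ω} := by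
    intro ω (hω : ε < |∑ i, V i ω|)
    rcases lt_abs.mp hω with h | h
    · exact Or.inl h.le
    · exact Or.inr (by simpa [Finset.sum_neg_distrib] using h.le)
  calc Pr.real {ω | ε < |∑ i, V i ω|}
      ≤ Pr.real {ω | ε ≤ ∑ i, V i ω} + Pr.real {ω | ε ≤ ∑ i, -V i ω} :=
        (measureReal_mono h_cover).trans (measureReal_union_le _ _)
    _ ≤ 2 * exp (-ε ^ 2 / (2 * (Fintype.card ι * c))) := by linarith

variable [IsProbabilityMeasure Pr]

lemma hasSubgaussianMGF_ite_le_sub {Z : Ω → ℝ} (hZ : Measurable Z) (x : ℝ) :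
    HasSubgaussianMGF (fun ω => (if Z ω ≤ x then (1 : ℝ) else 0) - Pr.real (Z ⁻¹' Set.Iic x))
      (1 / 4) Pr := by
  have h_ind : (fun ω => if Z ω ≤ x then (1 : ℝ) else 0) = (Z ⁻¹' Set.Iic x).indicator 1 :=
    rfl
  have h_meas : MeasurableSet (Z ⁻¹' Set.Iic x) := hZ measurableSet_Iic
  have h_mean : Pr[fun ω => if Z ω ≤ x then (1 : ℝ) else 0] = Pr.real (Z ⁻¹' Set.Iic x) := by
    rw [h_ind, integral_indicator_one h_meas]
  have := hasSubgaussianMGF_of_mem_Icc (μ := Pr) (a := 0) (b := 1)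
    (h_ind ▸ (measurable_one.indicator h_meas).aemeasurable)
    (ae_of_all _ fun ω => by split_ifs <;> simp)
  rw [h_mean] at this
  convert this using 1
  rw [sub_zero, nnnorm_one, div_pow, one_pow]
  norm_num

theorem measureReal_lt_abs_ecdfFin_sub_le {M : ℕ} {Z : Fin M → Ω → ℝ} {ν : Measure ℝ}
    (hmeas : ∀ j, Measurable (Z j)) (hindep : iIndepFun Z Pr) (hlaw : ∀ j, Pr.map (Z j) = ν)
    (x : ℝ) {t : ℝ} (ht : 0 ≤ t) :
    Pr.real {ω | t < |ecdfFin Z ω x - ν.real (Set.Iic x)|} ≤ 2 * exp (-2 * M * t ^ 2) := by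
  have hp (j : Fin M) : Pr.real (Z j ⁻¹' Set.Iic x) = ν.real (Set.Iic x) := by
    rw [← hlaw j, map_measureReal_apply (hmeas j) measurableSet_Iic]
  set p := ν.real (Set.Iic x)
  rcases Nat.eq_zero_or_pos M with rfl | hM
  · calc Pr.real _ ≤ 1 := measureReal_le_one
      _ ≤ 2 * exp (-2 * (0 : ℕ) * t ^ 2) := by simp
  have hM' : (0 : ℝ) < M := by exact_mod_cast hM
  have h_indep : iIndepFun (fun j ω => (if Z j ω ≤ x then (1 : ℝ) else 0) - p) Pr :=
    hindep.comp _ fun _ => (Measurable.ite measurableSet_Iic measurable_const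
      measurable_const).sub_const p
  have h_subG (j : Fin M) :
      HasSubgaussianMGF (fun ω => (if Z j ω ≤ x then (1 : ℝ) else 0) - p) (1 / 4) Pr :=
    hp j ▸ hasSubgaussianMGF_ite_le_sub (hmeas j) x
  have h_event : {ω | t < |ecdfFin Z ω x - p|} =
      {ω | M * t < |∑ j, ((if Z j ω ≤ x then (1 : ℝ) else 0) - p)|} := by
    ext ω
    rw [Set.mem_ofPred, Set.mem_ofPred, ecdfFin_sub_eq hM, abs_mul, abs_inv, abs_of_pos hM',
      inv_mul_eq_div, lt_div_iff₀' hM']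
  calc Pr.real {ω | t < |ecdfFin Z ω x - p|}
      ≤ 2 * exp (-(M * t) ^ 2 / (2 * (Fintype.card (Fin M) * ((1 / 4 : ℝ≥0) : ℝ)))) := by
        rw [h_event]
        exact measureReal_lt_abs_sum_le_of_iIndepFun h_indep h_subG (by positivity)
    _ = 2 * exp (-2 * M * t ^ 2) := by
        congr 2
        rw [Fintype.card_fin]
        push_cast
        field_simp
        ring

theorem measureReal_far_and_eligible_le {M M' : ℕ} {Z : Fin M → Ω → ℝ} {Z' : Fin M' → Ω → ℝ}
    {ν μ : Measure ℝ} (hZ : ∀ j, Measurable (Z j)) (hZ' : ∀ j, Measurable (Z' j))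
    (hindep : iIndepFun Z Pr) (hindep' : iIndepFun Z' Pr)
    (hlaw : ∀ j, Pr.map (Z j) = ν) (hlaw' : ∀ j, Pr.map (Z' j) = μ)
    {ε ε₁ ε₂ δ : ℝ} (hε₁ : 0 ≤ ε₁) (hε₂ : 0 ≤ ε₂) (hδ : ε₁ + ε₂ + δ ≤ ε) :
    Pr.real {ω | ε < (⨆ x : ℝ, |ν.real (Set.Iic x) - μ.real (Set.Iic x)|) ∧
        (⨆ x : ℝ, |ecdfFin Z ω x - ecdfFin Z' ω x|) ≤ δ}
      ≤ 2 * exp (-2 * M * ε₁ ^ 2) + 2 * exp (-2 * M' * ε₂ ^ 2) := by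
  by_cases h_far : ε < ⨆ x : ℝ, |ν.real (Set.Iic x) - μ.real (Set.Iic x)|
  · obtain ⟨x, hx⟩ := exists_lt_of_lt_ciSup (hδ.trans_lt h_far)
    have h_cover : {ω | ε < (⨆ x : ℝ, |ν.real (Set.Iic x) - μ.real (Set.Iic x)|) ∧
        (⨆ x : ℝ, |ecdfFin Z ω x - ecdfFin Z' ω x|) ≤ δ} ⊆
        {ω | ε₁ < |ecdfFin Z ω x - ν.real (Set.Iic x)|} ∪
          {ω | ε₂ < |ecdfFin Z' ω x - μ.real (Set.Iic x)|} := fun ω ⟨_, h_eligible⟩ =>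
      lt_abs_sub_or_lt_abs_sub_of_abs_sub_le hx
        ((le_ciSup (bddAbove_range_abs_ecdfFin_sub Z Z' ω) x).trans h_eligible)
    exact (measureReal_mono h_cover).trans ((measureReal_union_le _ _).trans
      (add_le_add (measureReal_lt_abs_ecdfFin_sub_le hZ hindep hlaw x hε₁)
        (measureReal_lt_abs_ecdfFin_sub_le hZ' hindep' hlaw' x hε₂)))
  · simp only [h_far, false_and, Set.ofPred_false, measureReal_empty]
    positivity

end Concentration

theorem stmt_4_general
    {Ω : Type*} [MeasurableSpace Ω] (Pr : Measure Ω) [IsProbabilityMeasure Pr]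
    (μ : Measure ℝ)
    {N n m : ℕ}
    (ν : Fin m → Measure ℝ)
    (X : Fin N → Ω → ℝ) (Y : Fin m → Fin n → Ω → ℝ)
    (hXm : ∀ i, Measurable (X i)) (hYm : ∀ i j, Measurable (Y i j))
    (hindep : iIndepFun
      (Sum.elim X (fun p : Fin m × Fin n => Y p.1 p.2)) Pr)
    (hX : ∀ k, Measure.map (X k) Pr = μ) (hY : ∀ i j, Measure.map (Y i j) Pr = ν i)
    (q : ℝ)
    (ε ε₁ ε₂ : ℝ) (hε₁ : 0 < ε₁) (hε₂ : 0 < ε₂) (hεsum : ε₁ + ε₂ < ε)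
    (hNlarge : (N : ℝ) > (q / (ε - ε₁ - ε₂)) ^ 2) :
    (Pr {ω | ∃ i : Fin m,
        ε < (⨆ x : ℝ, |(ν i (Set.Iic x)).toReal - (μ (Set.Iic x)).toReal|) ∧
        (⨆ x : ℝ, |ecdfFin (Y i) ω x - ecdfFin X ω x|) ≤ q / Real.sqrt N}).toReal
      ≤ 2 * m * (Real.exp (-2 * n * ε₁ ^ 2) + Real.exp (-2 * N * ε₂ ^ 2)) := by
  have hδ : ε₁ + ε₂ + q / √N ≤ ε := by
    have hd : 0 < ε - ε₁ - ε₂ := by linarith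
    linarith [div_sqrt_lt_of_sq_div_lt hd hNlarge]
  have h_candidate (i : Fin m) := measureReal_far_and_eligible_le (hYm i) hXm
    (hindep.precomp (g := fun j => Sum.inr (i, j)) fun _ _ h => by simpa using h)
    (hindep.precomp (g := Sum.inl) Sum.inl_injective) (hY i) hX hε₁.le hε₂.le hδ
  rw [Set.ofPred_exists]
  calc Pr.real _ ≤ ∑ _i : Fin m, (2 * exp (-2 * n * ε₁ ^ 2) + 2 * exp (-2 * N * ε₂ ^ 2)) :=
        (measureReal_iUnion_fintype_le _).trans (Finset.sum_le_sum fun i _ => h_candidate i)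
    _ = 2 * m * (exp (-2 * n * ε₁ ^ 2) + exp (-2 * N * ε₂ ^ 2)) := by
        simp only [Finset.sum_const, Finset.card_univ, Fintype.card_fin, nsmul_eq_mul]
        ring

/-- **Theorem 3 (Type II error guarantee for the eligibility-set algorithm).**
With candidates `θ₁,…,θ_m`, real data of size `N` from `F^{θ₀}` and simulated samples of
size `n` from each `F^{θᵢ}`, the probability that some candidate whose output CDF is more
than `ε` away (in KS distance) from the truth lies in the eligibility set
`𝓔̂_m = {θᵢ : sup_x |F_n^{θᵢ}(x) - F_N^{θ₀}(x)| ≤ q_{1-α}/√N}` is at most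
`2m(e^{-2nε₁²} + e^{-2Nε₂²})`. -/
theorem stmt_4
    {Ω : Type*} [MeasurableSpace Ω] (Pr : Measure Ω) [IsProbabilityMeasure Pr]
    (μ : Measure ℝ) [IsProbabilityMeasure μ]
    {N n m : ℕ} (hN0 : 0 < N) (hn0 : 0 < n)
    (ν : Fin m → Measure ℝ) [∀ i, IsProbabilityMeasure (ν i)]
    (X : Fin N → Ω → ℝ) (Y : Fin m → Fin n → Ω → ℝ)
    (hXm : ∀ i, Measurable (X i)) (hYm : ∀ i j, Measurable (Y i j))
    (hindep : iIndepFun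
      (Sum.elim X (fun p : Fin m × Fin n => Y p.1 p.2)) Pr)
    (hX : ∀ k, Measure.map (X k) Pr = μ) (hY : ∀ i j, Measure.map (Y i j) Pr = ν i)
    (α : ℝ) (hα : α ∈ Set.Ioo (0 : ℝ) 1)
    (q : ℝ) (hq0 : 0 < q)
    (hq : 2 * ∑' v : ℕ, (-1 : ℝ) ^ v * Real.exp (-2 * ((v : ℝ) + 1) ^ 2 * q ^ 2) = α)
    (ε ε₁ ε₂ : ℝ) (hε : 0 < ε) (hε₁ : 0 < ε₁) (hε₂ : 0 < ε₂) (hεsum : ε₁ + ε₂ < ε)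
    (hNlarge : (N : ℝ) > (q / (ε - ε₁ - ε₂)) ^ 2) :
    (Pr {ω | ∃ i : Fin m,
        ε < (⨆ x : ℝ, |(ν i (Set.Iic x)).toReal - (μ (Set.Iic x)).toReal|) ∧
        (⨆ x : ℝ, |ecdfFin (Y i) ω x - ecdfFin X ω x|) ≤ q / Real.sqrt N}).toReal
      ≤ 2 * m * (Real.exp (-2 * n * ε₁ ^ 2) + Real.exp (-2 * N * ε₂ ^ 2)) :=
  stmt_4_general Pr μ ν X Y hXm hYm hindep hX hY q ε ε₁ ε₂ hε₁ hε₂ hεsum hNlarge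
end

section
/- Let 𝓔̂_m = { θ_i : sup_{x∈ℝ} |F_n^{θ_i}(x) − F_N^{θ₀}(x)| ≤ q_{1−α}/√N } be the eligibility set constructed from an i.i.d. real sample of size N from F^{θ₀}, independent i.i.d. simulated samples of size n from each F^{θ_i}, and candidates θ₁,…,θ_m. If log m = o(N) and n = Ω(N) as N → ∞, then for any ε > 0, lim_{m,n,N→∞} ℙ( ∃ i ∈ {1,…,m} such that sup_{x∈ℝ} |F^{θ_i}(x) − F^{θ₀}(x)| > ε and θ_i ∈ 𝓔̂_m ) = 0. -/
/-!
At a single point `x`, the empirical distribution function of `M` i.i.d. samples is an average of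
independent `[0, 1]`-valued indicators, so by Hoeffding's inequality it deviates from the true
CDF by at least `δ` with probability at most `2 exp (-2 M δ²)`. If a candidate is `ε`-far from
the truth, pick `x` where its CDF differs from the true one by more than `ε = 3δ`; once
`q / √N ≤ δ`, eligibility forces one of the two empirical CDFs to be `δ`-off at `x`. A union
bound over the `m` candidates gives `m (2 exp (-2 n δ²) + 2 exp (-2 N δ²))`, which tends to `0`
because `log m = o(N)` and `n ≥ c N`.
-/

open MeasureTheory ProbabilityTheory Filter

/-- Empirical distribution function of the first `M` terms of a sequence of
real-valued random variables. -/
noncomputable def ecdfSeq {Ω : Type*} (Z : ℕ → Ω → ℝ) (M : ℕ) (ω : Ω) (x : ℝ) : ℝ :=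
  (M : ℝ)⁻¹ * ∑ i ∈ Finset.range M, if Z i ω ≤ x then (1 : ℝ) else 0

open Real Topology

theorem ecdfSeq_mem_Icc {Ω : Type*} (Z : ℕ → Ω → ℝ) (M : ℕ) (ω : Ω) (x : ℝ) :
    ecdfSeq Z M ω x ∈ Set.Icc 0 1 := by
  rw [ecdfSeq, Finset.sum_boole]
  refine ⟨by positivity, inv_mul_le_one_of_le₀ ?_ M.cast_nonneg⟩
  exact_mod_cast (Finset.card_filter_le _ _).trans (Finset.card_range M).le

theorem bddAbove_range_abs_ecdfSeq_sub {Ω : Type*} (U V : ℕ → Ω → ℝ) (M N : ℕ) (ω : Ω) :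
    BddAbove (Set.range fun x => |ecdfSeq U M ω x - ecdfSeq V N ω x|) := by
  refine ⟨1, ?_⟩
  rintro _ ⟨x, rfl⟩
  have hU := ecdfSeq_mem_Icc U M ω x
  have hV := ecdfSeq_mem_Icc V N ω x
  exact abs_sub_le_iff.2 ⟨by linarith [hU.2, hV.1], by linarith [hU.1, hV.2]⟩

section Probability

variable {Ω : Type*} [MeasurableSpace Ω] {Pr : Measure Ω}

theorem measureReal_setOf_exists_lt_le_sum (P : ℕ → Ω → Prop) (K : ℕ) :
    Pr.real {ω | ∃ i < K, P i ω} ≤ ∑ i ∈ Finset.range K, Pr.real {ω | P i ω} := by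
  convert measureReal_biUnion_finset_le (μ := Pr) (Finset.range K) fun i => {ω | P i ω} using 2
  ext ω
  simp

theorem measureReal_abs_sum_range_ge_le_of_iIndepFun [IsFiniteMeasure Pr] {X : ℕ → Ω → ℝ}
    (hind : iIndepFun X Pr) {c : NNReal} {M : ℕ} (hX : ∀ j < M, HasSubgaussianMGF (X j) c Pr)
    {t : ℝ} (ht : 0 ≤ t) :
    Pr.real {ω | t ≤ |∑ j ∈ Finset.range M, X j ω|} ≤ 2 * exp (-t ^ 2 / (2 * M * c)) := by
  have hindNeg : iIndepFun (fun j => -X j) Pr :=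
    hind.comp (fun _ => Neg.neg) fun _ => measurable_neg
  have hsub : {ω | t ≤ |∑ j ∈ Finset.range M, X j ω|} ⊆
      {ω | t ≤ ∑ j ∈ Finset.range M, X j ω} ∪ {ω | t ≤ ∑ j ∈ Finset.range M, (-X j) ω} := by
    intro ω hω
    simpa [le_abs', Finset.sum_neg_distrib, le_neg, or_comm] using hω
  calc Pr.real {ω | t ≤ |∑ j ∈ Finset.range M, X j ω|}
      ≤ Pr.real {ω | t ≤ ∑ j ∈ Finset.range M, X j ω}
        + Pr.real {ω | t ≤ ∑ j ∈ Finset.range M, (-X j) ω} :=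
        (measureReal_mono hsub).trans (measureReal_union_le _ _)
    _ ≤ exp (-t ^ 2 / (2 * M * c)) + exp (-t ^ 2 / (2 * M * c)) := by
        gcongr
        · exact HasSubgaussianMGF.measure_sum_range_ge_le_of_iIndepFun hind hX ht
        · exact HasSubgaussianMGF.measure_sum_range_ge_le_of_iIndepFun hindNeg
            (fun j hj => (hX j hj).neg) ht
    _ = 2 * exp (-t ^ 2 / (2 * M * c)) := by ring

theorem integral_ite_le_eq_toReal_measure_Iic {Z : Ω → ℝ} (hZm : Measurable Z) {ρ : Measure ℝ}
    (hZ : Pr.map Z = ρ) (x : ℝ) :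
    Pr[fun ω => if Z ω ≤ x then (1 : ℝ) else 0] = (ρ (Set.Iic x)).toReal := by
  rw [← hZ, Measure.map_apply hZm measurableSet_Iic, ← measureReal_def,
    ← integral_indicator_one (hZm measurableSet_Iic)]
  congr 1 with ω

theorem measureReal_abs_ecdfSeq_sub_ge_le [IsProbabilityMeasure Pr] {Z : ℕ → Ω → ℝ}
    (hZm : ∀ j, Measurable (Z j)) (hind : iIndepFun Z Pr) {ρ : Measure ℝ}
    (hZ : ∀ j, Pr.map (Z j) = ρ) (M : ℕ) (x : ℝ) {δ : ℝ} (hδ : 0 ≤ δ) :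
    Pr.real {ω | δ ≤ |ecdfSeq Z M ω x - (ρ (Set.Iic x)).toReal|}
      ≤ 2 * exp (-(2 * M * δ ^ 2)) := by
  rcases M.eq_zero_or_pos with rfl | hM
  · calc _ ≤ 1 := measureReal_le_one
      _ ≤ 2 * exp (-(2 * ((0 : ℕ) : ℝ) * δ ^ 2)) := by norm_num
  set p := (ρ (Set.Iic x)).toReal
  set W : ℕ → Ω → ℝ := fun j ω => (if Z j ω ≤ x then 1 else 0) - p
  have hWind : iIndepFun W Pr :=
    hind.comp (fun _ z => (if z ≤ x then (1 : ℝ) else 0) - p)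
      fun _ => (measurable_const.ite measurableSet_Iic measurable_const).sub_const p
  -- Hoeffding's lemma for a `[0, 1]`-valued variable: parameter `((1 - 0) / 2) ^ 2`.
  have hWsub : ∀ j < M, HasSubgaussianMGF (W j) (1 / 4) Pr := by
    intro j _
    have hZj : Measurable fun ω => if Z j ω ≤ x then (1 : ℝ) else 0 :=
      measurable_const.ite (hZm j measurableSet_Iic) measurable_const
    have h := hasSubgaussianMGF_of_mem_Icc (μ := Pr) (a := 0) (b := 1) hZj.aemeasurable
      (ae_of_all _ fun ω => by split_ifs <;> simp)
    rw [integral_ite_le_eq_toReal_measure_Iic (hZm j) (hZ j)] at h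
    convert h using 1
    norm_num
  have hset : {ω | δ ≤ |ecdfSeq Z M ω x - p|} =
      {ω | M * δ ≤ |∑ j ∈ Finset.range M, W j ω|} := by
    ext ω
    have hMpos : (0 : ℝ) < M := by exact_mod_cast hM
    have hW : ecdfSeq Z M ω x - p = (M : ℝ)⁻¹ * ∑ j ∈ Finset.range M, W j ω := by
      simp only [ecdfSeq, W, Finset.sum_sub_distrib, Finset.sum_const, Finset.card_range,
        nsmul_eq_mul]
      field_simp
    rw [Set.mem_ofPred_eq, Set.mem_ofPred_eq, hW, abs_mul, abs_inv, Nat.abs_cast,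
      ← div_eq_inv_mul, le_div_iff₀ hMpos, mul_comm]
  rw [hset]
  refine (measureReal_abs_sum_range_ge_le_of_iIndepFun hWind hWsub (by positivity)).trans_eq ?_
  congr 2
  push_cast
  field_simp
  ring

theorem measureReal_lt_iSup_and_iSup_abs_ecdfSeq_sub_le [IsProbabilityMeasure Pr]
    {U V : ℕ → Ω → ℝ}
    (hUm : ∀ j, Measurable (U j)) (hVm : ∀ j, Measurable (V j))
    (hUind : iIndepFun U Pr) (hVind : iIndepFun V Pr) {ρ σ : Measure ℝ}
    (hU : ∀ j, Pr.map (U j) = ρ) (hV : ∀ j, Pr.map (V j) = σ) (M N : ℕ) {ε δ : ℝ}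
    (hδ : 0 ≤ δ) (hεδ : 3 * δ ≤ ε) :
    Pr.real {ω | ε < (⨆ x : ℝ, |(ρ (Set.Iic x)).toReal - (σ (Set.Iic x)).toReal|) ∧
        (⨆ x : ℝ, |ecdfSeq U M ω x - ecdfSeq V N ω x|) ≤ δ}
      ≤ 2 * exp (-(2 * M * δ ^ 2)) + 2 * exp (-(2 * N * δ ^ 2)) := by
  by_cases hfar : ε < ⨆ x : ℝ, |(ρ (Set.Iic x)).toReal - (σ (Set.Iic x)).toReal|
  swap
  · simp only [hfar, false_and, Set.ofPred_false, measureReal_empty]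
    positivity
  obtain ⟨x, hx⟩ := exists_lt_of_lt_ciSup hfar
  have hsub : {ω | ε < (⨆ x : ℝ, |(ρ (Set.Iic x)).toReal - (σ (Set.Iic x)).toReal|) ∧
        (⨆ x : ℝ, |ecdfSeq U M ω x - ecdfSeq V N ω x|) ≤ δ} ⊆
      {ω | δ ≤ |ecdfSeq U M ω x - (ρ (Set.Iic x)).toReal|} ∪
        {ω | δ ≤ |ecdfSeq V N ω x - (σ (Set.Iic x)).toReal|} := by
    rintro ω ⟨-, hclose⟩
    have hUV : |ecdfSeq U M ω x - ecdfSeq V N ω x| ≤ δ :=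
      (le_ciSup (bddAbove_range_abs_ecdfSeq_sub U V M N ω) x).trans hclose
    by_contra h
    simp only [Set.mem_union, Set.mem_ofPred_eq, not_or, not_le] at h
    have h₁ := abs_sub_le (ρ (Set.Iic x)).toReal (ecdfSeq U M ω x) (σ (Set.Iic x)).toReal
    have h₂ := abs_sub_le (ecdfSeq U M ω x) (ecdfSeq V N ω x) (σ (Set.Iic x)).toReal
    rw [abs_sub_comm (ρ (Set.Iic x)).toReal (ecdfSeq U M ω x)] at h₁
    linarith [h.1, h.2]
  calc _ ≤ _ := (measureReal_mono hsub).trans (measureReal_union_le _ _)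
    _ ≤ _ := add_le_add (measureReal_abs_ecdfSeq_sub_ge_le hUm hUind hU M x hδ)
        (measureReal_abs_ecdfSeq_sub_ge_le hVm hVind hV N x hδ)

end Probability

theorem tendsto_mul_exp_neg_of_tendsto_log_div {m : ℕ → ℕ}
    (hm : Tendsto (fun N => log (m N) / N) atTop (𝓝 0)) {a : ℕ → ℝ} {c : ℝ} (hc : 0 < c)
    (ha : ∀ᶠ N in atTop, c * N ≤ a N) :
    Tendsto (fun N => (m N : ℝ) * exp (-a N)) atTop (𝓝 0) := by
  have hlog : ∀ᶠ N : ℕ in atTop, log (m N) ≤ c / 2 * N := by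
    filter_upwards [hm.eventually_lt_const (half_pos hc), eventually_gt_atTop 0] with N hN hN0
    rw [div_lt_iff₀ (by exact_mod_cast hN0)] at hN
    exact hN.le
  have hbound : ∀ᶠ N : ℕ in atTop, (m N : ℝ) * exp (-a N) ≤ exp (-(c / 2 * N)) := by
    filter_upwards [hlog, ha] with N hlogN haN
    rcases (m N).eq_zero_or_pos with h0 | hpos
    · rw [h0, Nat.cast_zero, zero_mul]
      positivity
    calc (m N : ℝ) * exp (-a N) = exp (log (m N) - a N) := by
          rw [sub_eq_add_neg, exp_add, exp_log (by exact_mod_cast hpos)]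
      _ ≤ exp (-(c / 2 * N)) := exp_le_exp.2 (by linarith)
  have hlim : Tendsto (fun N : ℕ => exp (-(c / 2 * N))) atTop (𝓝 0) :=
    tendsto_exp_neg_atTop_nhds_zero.comp
      (tendsto_natCast_atTop_atTop.const_mul_atTop (half_pos hc))
  exact squeeze_zero' (Eventually.of_forall fun N => by positivity) hbound hlim

theorem stmt_5_general
    {Ω : Type*} [MeasurableSpace Ω] (Pr : Measure Ω) [IsProbabilityMeasure Pr]
    (μ : Measure ℝ)
    (ν : ℕ → Measure ℝ)
    (X : ℕ → Ω → ℝ) (Y : ℕ → ℕ → Ω → ℝ)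
    (hXm : ∀ i, Measurable (X i)) (hYm : ∀ i j, Measurable (Y i j))
    (hindep : iIndepFun
      (Sum.elim X (fun p : ℕ × ℕ => Y p.1 p.2)) Pr)
    (hX : ∀ k, Measure.map (X k) Pr = μ) (hY : ∀ i j, Measure.map (Y i j) Pr = ν i)
    (q : ℝ)
    (m n : ℕ → ℕ)
    -- `log m = o(N)`
    (hlogm : Tendsto (fun N => Real.log (m N) / (N : ℝ)) atTop (nhds 0))
    -- `n = Ω(N)`
    (hnN : ∃ c > (0 : ℝ), ∀ᶠ N : ℕ in atTop, c * (N : ℝ) ≤ (n N : ℝ))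
    (ε : ℝ) (hε : 0 < ε) :
    Tendsto (fun N =>
      (Pr {ω | ∃ i < m N,
        ε < (⨆ x : ℝ, |(ν i (Set.Iic x)).toReal - (μ (Set.Iic x)).toReal|) ∧
        (⨆ x : ℝ, |ecdfSeq (Y i) (n N) ω x - ecdfSeq X N ω x|) ≤ q / Real.sqrt N}).toReal)
      atTop (nhds 0) := by
  obtain ⟨c, hc, hcn⟩ := hnN
  set δ := ε / 3 with hδdef
  have hδ : 0 < δ := by positivity
  have hindX : iIndepFun X Pr := hindep.precomp (g := Sum.inl) Sum.inl_injective
  have hindY (i : ℕ) : iIndepFun (Y i) Pr :=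
    hindep.precomp (g := fun j => Sum.inr (i, j)) fun j k h => by simpa using h
  have hthreshold : ∀ᶠ N : ℕ in atTop, q / √N ≤ δ :=
    ((tendsto_const_nhds.div_atTop (tendsto_sqrt_atTop.comp tendsto_natCast_atTop_atTop)
      ).eventually_lt_const hδ).mono fun _ h => h.le
  have hsim := tendsto_mul_exp_neg_of_tendsto_log_div hlogm (a := fun N => 2 * n N * δ ^ 2)
    (c := 2 * c * δ ^ 2) (by positivity) (hcn.mono fun N h => by nlinarith)
  have hreal := tendsto_mul_exp_neg_of_tendsto_log_div hlogm (a := fun N => 2 * N * δ ^ 2)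
    (c := 2 * δ ^ 2) (by positivity) (Eventually.of_forall fun N => le_of_eq (by ring))
  have hlim : Tendsto (fun N : ℕ =>
      (m N : ℝ) * (2 * exp (-(2 * n N * δ ^ 2)) + 2 * exp (-(2 * N * δ ^ 2)))) atTop (𝓝 0) := by
    simpa [mul_add, mul_left_comm] using (hsim.const_mul 2).add (hreal.const_mul 2)
  refine squeeze_zero' (Eventually.of_forall fun N => ENNReal.toReal_nonneg) ?_ hlim
  filter_upwards [hthreshold] with N hN
  calc _ ≤ ∑ _i ∈ Finset.range (m N),
        (2 * exp (-(2 * n N * δ ^ 2)) + 2 * exp (-(2 * N * δ ^ 2))) := by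
        refine (measureReal_setOf_exists_lt_le_sum _ _).trans (Finset.sum_le_sum fun i _ => ?_)
        refine (measureReal_mono ?_).trans
          (measureReal_lt_iSup_and_iSup_abs_ecdfSeq_sub_le (hYm i) hXm (hindY i) hindX
            (hY i) hX (n N) N (ε := ε) hδ.le (by linarith [hδdef]))
        exact fun ω h => ⟨h.1, h.2.trans hN⟩
    _ = _ := by rw [Finset.sum_const, Finset.card_range, nsmul_eq_mul]

/-- **Corollary 1.** If `log m = o(N)` and `n = Ω(N)`, then for any `ε > 0` the probability
that some candidate `θᵢ` with `sup_x |F^{θᵢ}(x) - F^{θ₀}(x)| > ε` lies in the eligibility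
set `𝓔̂_m` tends to `0` as `m, n, N → ∞`. -/
theorem stmt_5
    {Ω : Type*} [MeasurableSpace Ω] (Pr : Measure Ω) [IsProbabilityMeasure Pr]
    (μ : Measure ℝ) [IsProbabilityMeasure μ]
    (ν : ℕ → Measure ℝ) [∀ i, IsProbabilityMeasure (ν i)]
    (X : ℕ → Ω → ℝ) (Y : ℕ → ℕ → Ω → ℝ)
    (hXm : ∀ i, Measurable (X i)) (hYm : ∀ i j, Measurable (Y i j))
    (hindep : iIndepFun
      (Sum.elim X (fun p : ℕ × ℕ => Y p.1 p.2)) Pr)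
    (hX : ∀ k, Measure.map (X k) Pr = μ) (hY : ∀ i j, Measure.map (Y i j) Pr = ν i)
    (α : ℝ) (hα : α ∈ Set.Ioo (0 : ℝ) 1)
    (q : ℝ) (hq0 : 0 < q)
    (hq : 2 * ∑' v : ℕ, (-1 : ℝ) ^ v * Real.exp (-2 * ((v : ℝ) + 1) ^ 2 * q ^ 2) = α)
    (m n : ℕ → ℕ)
    (hm : Tendsto m atTop atTop) (hn : Tendsto n atTop atTop)
    -- `log m = o(N)`
    (hlogm : Tendsto (fun N => Real.log (m N) / (N : ℝ)) atTop (nhds 0))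
    -- `n = Ω(N)`
    (hnN : ∃ c > (0 : ℝ), ∀ᶠ N : ℕ in atTop, c * (N : ℝ) ≤ (n N : ℝ))
    (ε : ℝ) (hε : 0 < ε) :
    Tendsto (fun N =>
      (Pr {ω | ∃ i < m N,
        ε < (⨆ x : ℝ, |(ν i (Set.Iic x)).toReal - (μ (Set.Iic x)).toReal|) ∧
        (⨆ x : ℝ, |ecdfSeq (Y i) (n N) ω x - ecdfSeq X N ω x|) ≤ q / Real.sqrt N}).toReal)
      atTop (nhds 0) :=
  stmt_5_general Pr μ ν X Y hXm hYm hindep hX hY q m n hlogm hnN ε hε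
end

section
/- Suppose that X₁,…,X_N ∈ ℝ^K is an i.i.d. sample from a distribution whose k-th marginal CDF is F_k^{θ₀} and Y₁^{θ},…,Y_n^{θ} ∈ ℝ^K is an independent i.i.d. sample from a distribution whose k-th marginal CDF is F_k^{θ}, with F_{N,k}^{θ₀} and F_{n,k}^{θ} the empirical distribution functions of the k-th components, and suppose max_{1≤k≤K} sup_{x∈ℝ} |F_k^{θ}(x) − F_k^{θ₀}(x)| > 0. For any ε₁, ε₂ > 0 with ε₁ + ε₂ < max_{1≤k≤K} sup_{x∈ℝ} |F_k^{θ}(x) − F_k^{θ₀}(x)|, if N > ( q_{1−α/K} / (max_{1≤k≤K} sup_{x∈ℝ} |F_k^{θ}(x) − F_k^{θ₀}(x)| − ε₁ − ε₂) )², then ℙ( sup_{x∈ℝ} |F_{n,k}^{θ}(x) − F_{N,k}^{θ₀}(x)| ≤ q_{1−α/K}/√N for all 1 ≤ k ≤ K ) ≤ 2( e^{−2nε₁²} + e^{−2Nε₂²} ). -/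
open MeasureTheory ProbabilityTheory Filter

/-! Up to the margin `q / √N`, the gap `maxKS` between the marginal CDFs is attained at a single
coordinate `k` and point `x`. If both empirical CDFs at `(k, x)` were within `ε₁`, resp. `ε₂`, of
their means, the triangle inequality would push the two-sample statistic of coordinate `k` above
`q / √N`. So acceptance forces one of two deviation events, and each has probability at most
`2 exp (-2 M ε²)` by Hoeffding's inequality for the i.i.d. indicators `1{Z i k ≤ x}`. -/

/-- Empirical distribution function of the `k`-th coordinate of a finite sample of
`ℝ^K`-valued random variables. -/
noncomputable def ecdfCoordFin {Ω : Type*} {K M : ℕ} (Z : Fin M → Ω → Fin K → ℝ)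
    (k : Fin K) (ω : Ω) (x : ℝ) : ℝ :=
  (M : ℝ)⁻¹ * ∑ i, if Z i ω k ≤ x then (1 : ℝ) else 0

section Hoeffding

variable {Ω : Type*} [MeasurableSpace Ω] {P : Measure Ω} [IsProbabilityMeasure P]

theorem measureReal_le_abs_sum_sub_integral_le {ι : Type*} {W : ι → Ω → ℝ}
    (hind : iIndepFun W P) (hm : ∀ i, AEMeasurable (W i) P) {a b : ℝ}
    (hb : ∀ i, ∀ᵐ ω ∂P, W i ω ∈ Set.Icc a b) (s : Finset ι) {t : ℝ} (ht : 0 ≤ t) :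
    P.real {ω | t ≤ |∑ i ∈ s, (W i ω - P[W i])|}
      ≤ 2 * Real.exp (-2 * t ^ 2 / (s.card * (b - a) ^ 2)) := by
  have hsub i := hasSubgaussianMGF_of_mem_Icc (hm i) (hb i)
  have hcent : iIndepFun (fun i => (fun x => x - P[W i]) ∘ W i) P :=
    hind.comp _ fun _ => measurable_id.sub_const _
  have hupper := HasSubgaussianMGF.measure_sum_ge_le_of_iIndepFun hcent
    (fun i _ => hsub i) (s := s) ht
  have hlower := HasSubgaussianMGF.measure_sum_ge_le_of_iIndepFun
    (hcent.comp (fun _ x => -x) fun _ => measurable_neg) (fun i _ => (hsub i).neg) (s := s) ht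
  have hexp : -t ^ 2 / (2 * ∑ _i ∈ s, (‖b - a‖ / 2) ^ 2)
      = -2 * t ^ 2 / (s.card * (b - a) ^ 2) := by
    rw [Finset.sum_const, nsmul_eq_mul, Real.norm_eq_abs, div_pow, sq_abs]
    generalize (b - a) ^ 2 = d
    ring
  push_cast [Function.comp_def] at hupper hlower
  rw [hexp] at hupper hlower
  calc P.real {ω | t ≤ |∑ i ∈ s, (W i ω - P[W i])|}
      ≤ P.real ({ω | t ≤ ∑ i ∈ s, (W i ω - P[W i])}
          ∪ {ω | t ≤ ∑ i ∈ s, -(W i ω - P[W i])}) := by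
        refine measureReal_mono fun ω (hω : t ≤ |_|) => ?_
        rcases le_abs.mp hω with h | h
        · exact Or.inl h
        · exact Or.inr (show t ≤ _ by simpa only [← Finset.sum_neg_distrib] using h)
    _ ≤ _ := (measureReal_union_le _ _).trans (by linarith)

theorem measureReal_le_abs_ecdfCoordFin_sub_le {K M : ℕ} {Z : Fin M → Ω → Fin K → ℝ}
    (hZm : ∀ i, Measurable (Z i)) (hind : iIndepFun Z P) {ρ : Measure (Fin K → ℝ)}
    (hZρ : ∀ i, P.map (Z i) = ρ) (k : Fin K) (x : ℝ) {ε : ℝ} (hε : 0 ≤ ε) :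
    P.real {ω | ε ≤ |ecdfCoordFin Z k ω x - ρ.real {v | v k ≤ x}|}
      ≤ 2 * Real.exp (-2 * M * ε ^ 2) := by
  rcases M.eq_zero_or_pos with rfl | hM
  · simpa using (measureReal_le_one (μ := P)).trans one_le_two
  set S : Set (Fin K → ℝ) := {v | v k ≤ x}
  have hS : MeasurableSet S := measurableSet_le (measurable_pi_apply k) measurable_const
  set W : Fin M → Ω → ℝ := fun i ω => S.indicator 1 (Z i ω)
  have hW_mean i : P[W i] = ρ.real S := by
    rw [← integral_map (hZm i).aemeasurable (measurable_one.indicator hS).aestronglyMeasurable,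
      hZρ i, integral_indicator_one hS]
  have hW_sum ω : ∑ i, (W i ω - P[W i]) = M * (ecdfCoordFin Z k ω x - ρ.real S) := by
    have hW_ecdf : ∑ i, W i ω = M * ecdfCoordFin Z k ω x := by
      simp only [ecdfCoordFin, W, S, Set.indicator_apply, Set.mem_ofPred_eq, Pi.one_apply]
      field_simp
    simp only [Finset.sum_sub_distrib, hW_ecdf, hW_mean, Finset.sum_const, Finset.card_univ,
      Fintype.card_fin, nsmul_eq_mul]
    ring
  have hbound := measureReal_le_abs_sum_sub_integral_le (P := P) (a := 0) (b := 1)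
    (hind.comp _ fun _ => measurable_one.indicator hS)
    (fun i => ((measurable_one.indicator hS).comp (hZm i)).aemeasurable)
    (fun i => ae_of_all _ fun ω => ⟨Set.indicator_nonneg (fun _ _ => zero_le_one) _,
      Set.indicator_le_self' (fun _ _ => zero_le_one) _⟩) Finset.univ
    (mul_nonneg M.cast_nonneg hε)
  calc P.real {ω | ε ≤ |ecdfCoordFin Z k ω x - ρ.real S|}
      ≤ P.real {ω | M * ε ≤ |∑ i, (W i ω - P[W i])|} := by
        refine measureReal_mono fun ω (hω : ε ≤ |_|) => ?_
        show (M : ℝ) * ε ≤ |_|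
        rw [hW_sum, abs_mul, Nat.abs_cast]
        gcongr
    _ ≤ 2 * Real.exp (-2 * M * ε ^ 2) := by
        refine hbound.trans_eq ?_
        rw [Finset.card_univ, Fintype.card_fin, sub_zero, one_pow, mul_one]
        field_simp

end Hoeffding

section Ecdf

variable {Ω : Type*} {K : ℕ}

theorem ecdfCoordFin_nonneg {M : ℕ} (Z : Fin M → Ω → Fin K → ℝ) (k : Fin K) (ω : Ω) (x : ℝ) :
    0 ≤ ecdfCoordFin Z k ω x :=
  mul_nonneg (by positivity) (Finset.sum_nonneg fun _ _ => by split_ifs <;> norm_num)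

theorem ecdfCoordFin_le_one {M : ℕ} (Z : Fin M → Ω → Fin K → ℝ) (k : Fin K) (ω : Ω) (x : ℝ) :
    ecdfCoordFin Z k ω x ≤ 1 := by
  refine inv_mul_le_one_of_le₀ ?_ M.cast_nonneg
  calc (∑ i, if Z i ω k ≤ x then (1 : ℝ) else 0) ≤ ∑ _i : Fin M, (1 : ℝ) :=
        Finset.sum_le_sum fun _ _ => by split_ifs <;> norm_num
    _ = M := by simp

theorem abs_ecdfCoordFin_sub_le_iSup {M N : ℕ} (Y : Fin M → Ω → Fin K → ℝ)
    (X : Fin N → Ω → Fin K → ℝ) (k : Fin K) (ω : Ω) (x : ℝ) :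
    |ecdfCoordFin Y k ω x - ecdfCoordFin X k ω x|
      ≤ ⨆ y, |ecdfCoordFin Y k ω y - ecdfCoordFin X k ω y| := by
  refine le_ciSup (f := fun y => |ecdfCoordFin Y k ω y - ecdfCoordFin X k ω y|) ⟨1, ?_⟩ x
  rintro _ ⟨y, rfl⟩
  have := ecdfCoordFin_nonneg Y k ω y
  have := ecdfCoordFin_le_one Y k ω y
  have := ecdfCoordFin_nonneg X k ω y
  have := ecdfCoordFin_le_one X k ω y
  exact abs_sub_le_iff.2 ⟨by linarith, by linarith⟩

end Ecdf

theorem le_abs_sub_or_le_abs_sub {a b p p₀ c ε₁ ε₂ : ℝ} (hab : |a - b| ≤ c)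
    (hgap : ε₁ + ε₂ + c < |p - p₀|) : ε₁ ≤ |a - p| ∨ ε₂ ≤ |b - p₀| := by
  by_contra! h
  linarith [abs_sub_le p a p₀, abs_sub_le a b p₀, abs_sub_comm a p]

theorem stmt_14_general
    {Ω : Type*} [MeasurableSpace Ω] (Pr : Measure Ω) [IsProbabilityMeasure Pr]
    {K : ℕ} (hK : 0 < K)
    (μ ν : Measure (Fin K → ℝ))
    {N n : ℕ}
    (X : Fin N → Ω → Fin K → ℝ) (Y : Fin n → Ω → Fin K → ℝ)
    (hXm : ∀ i, Measurable (X i)) (hYm : ∀ j, Measurable (Y j))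
    (hindep : iIndepFun (Sum.elim X Y) Pr)
    (hX : ∀ i, Measure.map (X i) Pr = μ) (hY : ∀ j, Measure.map (Y j) Pr = ν)
    -- `q` is the `(1 - α/K)`-quantile of the supremum of the absolute value of a
    -- Brownian bridge: the unique `z > 0` with `2 ∑_{v=1}^∞ (-1)^{v-1} e^{-2 v² z²} = α/K`.
    (q : ℝ) (hq0 : 0 < q)
    -- `maxKS` is `max_{1 ≤ k ≤ K} sup_x |F_k^θ(x) - F_k^{θ₀}(x)|`, with the `k`-th marginal
    -- CDFs `F_k^θ(x) = ν {v | v k ≤ x}` and `F_k^{θ₀}(x) = μ {v | v k ≤ x}`.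
    (maxKS : ℝ)
    (hmaxKS : maxKS = ⨆ k : Fin K, ⨆ x : ℝ,
      |(ν {v | v k ≤ x}).toReal - (μ {v | v k ≤ x}).toReal|)
    (ε₁ ε₂ : ℝ) (hε₁ : 0 < ε₁) (hε₂ : 0 < ε₂) (hεsum : ε₁ + ε₂ < maxKS)
    (hNlarge : (N : ℝ) > (q / (maxKS - ε₁ - ε₂)) ^ 2) :
    (Pr {ω | ∀ k : Fin K,
        (⨆ x : ℝ, |ecdfCoordFin Y k ω x - ecdfCoordFin X k ω x|) ≤ q / Real.sqrt N}).toReal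
      ≤ 2 * (Real.exp (-2 * n * ε₁ ^ 2) + Real.exp (-2 * N * ε₂ ^ 2)) := by
  have hd : 0 < maxKS - ε₁ - ε₂ := by linarith
  have hqd : q / (maxKS - ε₁ - ε₂) < √N := Real.lt_sqrt_of_sq_lt hNlarge
  have hgap : ε₁ + ε₂ + q / √N < maxKS := by
    have := (div_lt_comm₀ hd ((div_pos hq0 hd).trans hqd)).1 hqd
    linarith
  have : Nonempty (Fin K) := ⟨⟨0, hK⟩⟩
  obtain ⟨k, hk⟩ := exists_lt_of_lt_ciSup (hmaxKS ▸ hgap)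
  obtain ⟨x, hx⟩ := exists_lt_of_lt_ciSup hk
  calc Pr.real {ω | ∀ k : Fin K,
        (⨆ x : ℝ, |ecdfCoordFin Y k ω x - ecdfCoordFin X k ω x|) ≤ q / √N}
      ≤ Pr.real ({ω | ε₁ ≤ |ecdfCoordFin Y k ω x - ν.real {v | v k ≤ x}|}
          ∪ {ω | ε₂ ≤ |ecdfCoordFin X k ω x - μ.real {v | v k ≤ x}|}) :=
        measureReal_mono fun ω hω => le_abs_sub_or_le_abs_sub
          ((abs_ecdfCoordFin_sub_le_iSup Y X k ω x).trans (hω k)) hx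
    _ ≤ 2 * Real.exp (-2 * n * ε₁ ^ 2) + 2 * Real.exp (-2 * N * ε₂ ^ 2) :=
        (measureReal_union_le _ _).trans <| add_le_add
          (measureReal_le_abs_ecdfCoordFin_sub_le hYm
            (hindep.precomp (g := Sum.inr) Sum.inr_injective) hY k x hε₁.le)
          (measureReal_le_abs_ecdfCoordFin_sub_le hXm
            (hindep.precomp (g := Sum.inl) Sum.inl_injective) hX k x hε₂.le)
    _ = 2 * (Real.exp (-2 * n * ε₁ ^ 2) + Real.exp (-2 * N * ε₂ ^ 2)) := by ring

/-- **Theorem 10 (SKS with Bonferroni correction: Type II error bound).** -/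
theorem stmt_14
    {Ω : Type*} [MeasurableSpace Ω] (Pr : Measure Ω) [IsProbabilityMeasure Pr]
    {K : ℕ} (hK : 0 < K)
    (μ ν : Measure (Fin K → ℝ)) [IsProbabilityMeasure μ] [IsProbabilityMeasure ν]
    {N n : ℕ} (hN0 : 0 < N) (hn0 : 0 < n)
    (X : Fin N → Ω → Fin K → ℝ) (Y : Fin n → Ω → Fin K → ℝ)
    (hXm : ∀ i, Measurable (X i)) (hYm : ∀ j, Measurable (Y j))
    (hindep : iIndepFun (Sum.elim X Y) Pr)
    (hX : ∀ i, Measure.map (X i) Pr = μ) (hY : ∀ j, Measure.map (Y j) Pr = ν)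
    (α : ℝ) (hα : α ∈ Set.Ioo (0 : ℝ) 1)
    -- `q` is the `(1 - α/K)`-quantile of the supremum of the absolute value of a
    -- Brownian bridge: the unique `z > 0` with `2 ∑_{v=1}^∞ (-1)^{v-1} e^{-2 v² z²} = α/K`.
    (q : ℝ) (hq0 : 0 < q)
    (hq : 2 * ∑' v : ℕ, (-1 : ℝ) ^ v * Real.exp (-2 * ((v : ℝ) + 1) ^ 2 * q ^ 2) = α / K)
    -- `maxKS` is `max_{1 ≤ k ≤ K} sup_x |F_k^θ(x) - F_k^{θ₀}(x)|`, with the `k`-th marginal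
    -- CDFs `F_k^θ(x) = ν {v | v k ≤ x}` and `F_k^{θ₀}(x) = μ {v | v k ≤ x}`.
    (maxKS : ℝ)
    (hmaxKS : maxKS = ⨆ k : Fin K, ⨆ x : ℝ,
      |(ν {v | v k ≤ x}).toReal - (μ {v | v k ≤ x}).toReal|)
    (hKSpos : 0 < maxKS)
    (ε₁ ε₂ : ℝ) (hε₁ : 0 < ε₁) (hε₂ : 0 < ε₂) (hεsum : ε₁ + ε₂ < maxKS)
    (hNlarge : (N : ℝ) > (q / (maxKS - ε₁ - ε₂)) ^ 2) :
    (Pr {ω | ∀ k : Fin K,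
        (⨆ x : ℝ, |ecdfCoordFin Y k ω x - ecdfCoordFin X k ω x|) ≤ q / Real.sqrt N}).toReal
      ≤ 2 * (Real.exp (-2 * n * ε₁ ^ 2) + Real.exp (-2 * N * ε₂ ^ 2)) :=
  stmt_14_general Pr hK μ ν X Y hXm hYm hindep hX hY q hq0 maxKS hmaxKS ε₁ ε₂ hε₁ hε₂ hεsum hNlarge
end
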